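/- Let p ≤ α and define for the CSM stopping time τ = inf{n : S_n ≥ u_n or S_n ≤ l_n} (with boundaries l_n, u_n as in the confidence sequence method with parameters α, ε) the estimator p̂ = S_τ/τ if τ < ∞ and p̂ = α if τ = ∞. Then ℙ_p(p̂ > α) < ε. -/

import Mathlib

open MeasureTheory ProbabilityTheory

/-- The binomial probability mass function `b(n,p,x) = C(n,x) p^x (1-p)^(n-x)`. -/
noncomputable def binomPMF (n : ℕ) (p : ℝ) (x : ℕ) : ℝ :=
  (n.choose x : ℝ) * p ^ x * (1 - p) ^ (n - x)

open Classical in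
/-- CSM upper stopping boundary `u_n = max{k : (n+1) b(n,α,k) > ε} + 1`. -/
noncomputable def csmUpper (α ε : ℝ) (n : ℕ) : ℤ :=
  ((((Finset.range (n + 1)).filter
      (fun k => ε < ((n : ℝ) + 1) * binomPMF n α k)).max.unbotD 0 : ℕ) : ℤ) + 1

open Classical in
/-- CSM lower stopping boundary `l_n = min{k : (n+1) b(n,α,k) > ε} − 1`. -/
noncomputable def csmLower (α ε : ℝ) (n : ℕ) : ℤ :=
  ((((Finset.range (n + 1)).filter
      (fun k => ε < ((n : ℝ) + 1) * binomPMF n α k)).min.untopD 0 : ℕ) : ℤ) - 1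

/-- The CSM stopping condition at step `n`: the partial sum hits the upper or lower boundary. -/
def csmStop (α ε : ℝ) (S : ℕ → ℤ) (n : ℕ) : Prop :=
  csmUpper α ε n ≤ S n ∨ S n ≤ csmLower α ε n

open Classical in
/-- The CSM p-value estimate `p̂ = S_τ/τ` if `τ < ∞`, and `p̂ = α` otherwise, where
`τ = inf{n : S_n ≥ u_n or S_n ≤ l_n}`. -/
noncomputable def csmEstimate (α ε : ℝ) (S : ℕ → ℤ) : ℝ :=
  if h : ∃ n, csmStop α ε S n then
    ((S (sInf {n : ℕ | csmStop α ε S n}) : ℝ) / ((sInf {n : ℕ | csmStop α ε S n} : ℕ) : ℝ))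
  else α


/-! Write `L_θ(A) = θ ^ s (1 - θ) ^ (n - s)` for the likelihood of a path `A` with `s` successes in
`n` trials and `W(A) = ∫₀¹ L_θ(A) dθ = 1 / ((n + 1) C(n, s))` for its likelihood under a uniform
prior. The upper boundary is where `(n + 1) b(n, α, s) ≤ ε`, i.e. `L_α(A) ≤ ε W(A)`, and it lies
above `n α`, where `θ ↦ L_θ(A)` is increasing on `[0, α]`; hence `L_p ≤ ε W` on every path that
stops at the upper boundary. Since `W(A) = W(A0) + W(A1)`, the `W`-masses of the first-stopped
paths add up to at most `1`, and the all-failure path, which stops at the lower boundary, keeps a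
positive part of that mass away. Stopping at the lower boundary gives `p̂ ≤ α` because
`l_n < n α`, so `ℙ_p(p̂ > α) ≤ ε (1 - W(∅)) < ε`. -/

open Finset

section Binomial

lemma binomPMF_succ_mul {n k : ℕ} (hk : k < n) (α : ℝ) :
    binomPMF n α (k + 1) * ((k + 1) * (1 - α)) = binomPMF n α k * ((n - k) * α) := by
  have hchoose : (n.choose (k + 1) : ℝ) * (k + 1) = n.choose k * ((n : ℝ) - k) := by
    have := congrArg (Nat.cast (R := ℝ)) (Nat.choose_succ_right_eq n k)
    push_cast [Nat.cast_sub hk.le] at this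
    exact this
  have hpow : (1 - α) ^ (n - k) = (1 - α) ^ (n - (k + 1)) * (1 - α) := by
    rw [← pow_succ]; congr 1; omega
  unfold binomPMF
  rw [hpow, pow_succ]
  linear_combination (α ^ k * α * ((1 - α) ^ (n - (k + 1)) * (1 - α))) * hchoose

lemma sum_binomPMF (n : ℕ) (α : ℝ) : ∑ k ∈ range (n + 1), binomPMF n α k = 1 := by
  have := add_pow α (1 - α) n
  rw [add_sub_cancel, one_pow] at this
  rw [this]
  exact sum_congr rfl fun k _ => by unfold binomPMF; ring

variable {α ε : ℝ}

/-- Take a mode `k`: the `n + 1` probabilities sum to one, and comparing `k` with its neighbours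
through `binomPMF_succ_mul` locates it. -/
lemma exists_binomPMF_ge_near_mean (hα : α ∈ Set.Icc 0 1) (n : ℕ) :
    ∃ k ≤ n, 1 ≤ (n + 1) * binomPMF n α k ∧ (k : ℝ) ≤ (n + 1) * α ∧ (n + 1) * α ≤ k + 1 := by
  obtain ⟨k, hk, hmax⟩ :=
    exists_max_image (range (n + 1)) (binomPMF n α) nonempty_range_add_one
  have hkn : k ≤ n := Nat.lt_succ_iff.1 (mem_range.1 hk)
  have hmode : 1 ≤ (n + 1) * binomPMF n α k := by
    calc (1 : ℝ) = ∑ j ∈ range (n + 1), binomPMF n α j := (sum_binomPMF n α).symm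
      _ ≤ ∑ _j ∈ range (n + 1), binomPMF n α k := sum_le_sum hmax
      _ = (n + 1) * binomPMF n α k := by simp
  have hpos : 0 < binomPMF n α k := by
    by_contra! h
    nlinarith [show (0 : ℝ) ≤ n from n.cast_nonneg]
  obtain ⟨hα0, hα1⟩ := hα
  refine ⟨k, hkn, hmode, ?_, ?_⟩
  · cases k with
    | zero => simp only [Nat.cast_zero]; positivity
    | succ j =>
      have hjn : (j : ℝ) < n := by exact_mod_cast hkn
      have hstep := binomPMF_succ_mul (Nat.succ_le_iff.1 hkn) α
      have hle := mul_le_mul_of_nonneg_right (hmax j (mem_range.2 (by omega)))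
        (by nlinarith : (0 : ℝ) ≤ (n - j) * α)
      push_cast
      nlinarith
  · rcases hkn.lt_or_eq with hkn | rfl
    · have hstep := binomPMF_succ_mul hkn α
      have hle := mul_le_mul_of_nonneg_right (hmax (k + 1) (mem_range.2 (by omega)))
        (by nlinarith : (0 : ℝ) ≤ (k + 1) * (1 - α))
      nlinarith
    · nlinarith

open Classical in
noncomputable def csmConfidenceSet (α ε : ℝ) (n : ℕ) : Finset ℕ :=
  (range (n + 1)).filter fun k => ε < ((n : ℝ) + 1) * binomPMF n α k

lemma mem_csmConfidenceSet {n k : ℕ} :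
    k ∈ csmConfidenceSet α ε n ↔ k ≤ n ∧ ε < ((n : ℝ) + 1) * binomPMF n α k := by
  simp [csmConfidenceSet]

lemma lt_csmUpper_of_mem {n k : ℕ} (hk : k ∈ csmConfidenceSet α ε n) :
    (k : ℤ) < csmUpper α ε n := by
  have hmax := le_max' _ _ hk
  change (k : ℤ) < (((csmConfidenceSet α ε n).max.unbotD 0 : ℕ) : ℤ) + 1
  rw [← coe_max' ⟨k, hk⟩, WithBot.unbotD_coe]
  omega

lemma csmLower_lt_of_mem {n k : ℕ} (hk : k ∈ csmConfidenceSet α ε n) :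
    csmLower α ε n < k := by
  have hmin := min'_le _ _ hk
  change (((csmConfidenceSet α ε n).min.untopD 0 : ℕ) : ℤ) - 1 < k
  rw [← coe_min' ⟨k, hk⟩, WithTop.untopD_coe]
  omega

lemma csmLower_nonneg_of_zero_notMem {n : ℕ} (hne : (csmConfidenceSet α ε n).Nonempty)
    (h0 : 0 ∉ csmConfidenceSet α ε n) : 0 ≤ csmLower α ε n := by
  have hmin := min'_mem _ hne
  change 0 ≤ (((csmConfidenceSet α ε n).min.untopD 0 : ℕ) : ℤ) - 1
  rw [← coe_min' hne, WithTop.untopD_coe]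
  have : (csmConfidenceSet α ε n).min' hne ≠ 0 := fun h => h0 (h ▸ hmin)
  omega

lemma exists_mem_csmConfidenceSet_near_mean (hα : α ∈ Set.Icc 0 1) (hε : ε < 1) (n : ℕ) :
    ∃ k ∈ csmConfidenceSet α ε n, (k : ℝ) ≤ (n + 1) * α ∧ (n + 1) * α ≤ k + 1 := by
  obtain ⟨k, hkn, hmode, hk⟩ := exists_binomPMF_ge_near_mean hα n
  exact ⟨k, mem_csmConfidenceSet.2 ⟨hkn, hε.trans_le hmode⟩, hk⟩

lemma mul_lt_csmUpper (hα : α ∈ Set.Ioo 0 1) (hε : ε < 1) (n : ℕ) :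
    (n : ℝ) * α < csmUpper α ε n := by
  obtain ⟨k, hk, -, hk1⟩ :=
    exists_mem_csmConfidenceSet_near_mean (Set.Ioo_subset_Icc_self hα) hε n
  have : (k : ℝ) + 1 ≤ csmUpper α ε n := by exact_mod_cast lt_csmUpper_of_mem hk
  linarith [hα.1]

lemma csmUpper_pos (hα : α ∈ Set.Ioo 0 1) (hε : ε < 1) (n : ℕ) : 0 < csmUpper α ε n := by
  have := (mul_nonneg n.cast_nonneg hα.1.le).trans_lt (mul_lt_csmUpper hα hε n)
  exact_mod_cast this

lemma csmLower_lt_mul (hα : α ∈ Set.Ioo 0 1) (hε : ε < 1) (n : ℕ) :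
    (csmLower α ε n : ℝ) < n * α := by
  obtain ⟨k, hk, hk1, -⟩ :=
    exists_mem_csmConfidenceSet_near_mean (Set.Ioo_subset_Icc_self hα) hε n
  have : (csmLower α ε n : ℝ) + 1 ≤ k := by exact_mod_cast csmLower_lt_of_mem hk
  linarith [hα.2]

lemma mul_binomPMF_le_of_csmUpper_le {n s : ℕ} (hs : s ≤ n) (h : csmUpper α ε n ≤ s) :
    ((n : ℝ) + 1) * binomPMF n α s ≤ ε :=
  not_lt.1 fun h' => (lt_csmUpper_of_mem (mem_csmConfidenceSet.2 ⟨hs, h'⟩)).not_ge h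

lemma exists_csmLower_nonneg (hα : α ∈ Set.Ioo 0 1) (hε : ε ∈ Set.Ioo 0 1) :
    ∃ n, 0 ≤ csmLower α ε n := by
  have hr : |1 - α| < 1 := by rw [abs_lt]; constructor <;> linarith [hα.1, hα.2]
  have hlim :
      Filter.Tendsto (fun n : ℕ => ((n : ℝ) + 1) * (1 - α) ^ n) Filter.atTop (nhds 0) := by
    simpa [add_mul] using (tendsto_pow_const_mul_const_pow_of_abs_lt_one 1 hr).add
      (tendsto_pow_atTop_nhds_zero_of_abs_lt_one hr)
  obtain ⟨n, hn⟩ := (hlim.eventually_lt_const hε.1).exists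
  obtain ⟨k, hk, -⟩ :=
    exists_mem_csmConfidenceSet_near_mean (Set.Ioo_subset_Icc_self hα) hε.2 n
  refine ⟨n, csmLower_nonneg_of_zero_notMem ⟨k, hk⟩ fun h0 => ?_⟩
  have := (mem_csmConfidenceSet.1 h0).2
  simp only [binomPMF, Nat.choose_zero_right, Nat.cast_one, pow_zero, one_mul, Nat.sub_zero] at this
  linarith

end Binomial

section StoppedPaths

/-! A path of length `n` is encoded by its set `A ⊆ range n` of success times; at time `k` a
stopping rule sees the prefix `A ∩ range k`. -/

variable (rule : ℕ → Finset ℕ → Prop)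

open Classical in
noncomputable def alivePaths (n : ℕ) : Finset (Finset ℕ) :=
  (range n).powerset.filter fun A => ∀ k < n, ¬ rule k (A ∩ range k)

open Classical in
noncomputable def firstStopPaths (n : ℕ) : Finset (Finset ℕ) :=
  (alivePaths rule n).filter (rule n)

variable {rule}

lemma mem_firstStopPaths {n : ℕ} {A : Finset ℕ} :
    A ∈ firstStopPaths rule n ↔
      A ⊆ range n ∧ (∀ k < n, ¬ rule k (A ∩ range k)) ∧ rule n A := by
  simp [firstStopPaths, alivePaths, and_assoc]

variable {w : ℕ → ℕ → ℝ}

open Classical in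
lemma sum_alivePaths_succ (hw : ∀ n s, s ≤ n → w n s = w (n + 1) s + w (n + 1) (s + 1))
    (n : ℕ) :
    ∑ A ∈ alivePaths rule (n + 1), w (n + 1) #A =
      ∑ A ∈ (alivePaths rule n).filter (fun A => ¬ rule n A), w n #A := by
  have hprefix : ∀ A ⊆ range n, ∀ k < n + 1, insert n A ∩ range k = A ∩ range k :=
    fun A _ k hk => insert_inter_of_notMem (by simpa using hk)
  have halive : ∀ A ⊆ range n, (∀ k < n + 1, ¬ rule k (A ∩ range k)) ↔
      (∀ k < n, ¬ rule k (A ∩ range k)) ∧ ¬ rule n A := fun A hA => by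
    rw [Nat.forall_lt_succ_right, inter_eq_left.2 hA]
  rw [alivePaths, alivePaths, filter_filter, sum_filter, sum_filter, range_add_one,
    sum_powerset_insert notMem_range_self, ← sum_add_distrib]
  refine sum_congr rfl fun A hA => ?_
  have hA : A ⊆ range n := mem_powerset.1 hA
  have hnA : n ∉ A := fun h => notMem_range_self (hA h)
  have hinsert : (∀ k < n + 1, ¬ rule k (insert n A ∩ range k)) ↔
      ∀ k < n + 1, ¬ rule k (A ∩ range k) :=
    forall₂_congr fun k hk => by rw [hprefix A hA k hk]
  simp only [hinsert, halive A hA, card_insert_of_notMem hnA]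
  split_ifs
  · exact (hw n #A (card_le_card hA |>.trans_eq (card_range n))).symm
  · simp

lemma sum_firstStopPaths_add_sum_alivePaths
    (hw : ∀ n s, s ≤ n → w n s = w (n + 1) s + w (n + 1) (s + 1)) (N : ℕ) :
    ∑ n ∈ range N, ∑ A ∈ firstStopPaths rule n, w n #A +
      ∑ A ∈ alivePaths rule N, w N #A = w 0 0 := by
  induction N with
  | zero => simp [alivePaths]
  | succ N ih =>
    rw [← ih, sum_range_succ, sum_alivePaths_succ hw, add_assoc, firstStopPaths,
      sum_filter_add_sum_filter_not]

lemma sum_firstStopPaths_le (hw : ∀ n s, s ≤ n → w n s = w (n + 1) s + w (n + 1) (s + 1))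
    (hw0 : ∀ n s, 0 ≤ w n s) (N : ℕ) :
    ∑ n ∈ range N, ∑ A ∈ firstStopPaths rule n, w n #A ≤ w 0 0 := by
  rw [← sum_firstStopPaths_add_sum_alivePaths hw N]
  exact le_add_of_nonneg_right (sum_nonneg fun _ _ => hw0 _ _)

end StoppedPaths

section MixtureWeight

/-- `∫₀¹ θ ^ s (1 - θ) ^ (n - s) dθ`: the probability of one path with `s` successes in `n`
trials when the success probability is drawn uniformly from `[0, 1]`. -/
noncomputable def mixtureWeight (n s : ℕ) : ℝ := (((n : ℝ) + 1) * n.choose s)⁻¹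

lemma mixtureWeight_nonneg (n s : ℕ) : 0 ≤ mixtureWeight n s := by
  unfold mixtureWeight; positivity

lemma mixtureWeight_eq_add {n s : ℕ} (hs : s ≤ n) :
    mixtureWeight n s = mixtureWeight (n + 1) s + mixtureWeight (n + 1) (s + 1) := by
  have h₀ : ((n + 1).choose s : ℝ) * (n + 1 - s) = n.choose s * (n + 1) := by
    have := congrArg (Nat.cast (R := ℝ)) (Nat.choose_mul_succ_eq n s)
    push_cast [Nat.cast_sub (by omega : s ≤ n + 1)] at this
    linarith
  have h₁ : ((n + 1).choose (s + 1) : ℝ) * (s + 1) = n.choose s * (n + 1) := by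
    exact_mod_cast (Nat.add_one_mul_choose_eq n s).symm.trans (mul_comm _ _)
  have hc : (0 : ℝ) < n.choose s := by exact_mod_cast Nat.choose_pos hs
  have hc₀ : (0 : ℝ) < (n + 1).choose s := by exact_mod_cast Nat.choose_pos (by omega)
  have hc₁ : (0 : ℝ) < (n + 1).choose (s + 1) := by exact_mod_cast Nat.choose_pos (by omega)
  unfold mixtureWeight
  push_cast
  field_simp
  linear_combination ((n + 1).choose s : ℝ) * h₁ + ((n + 1).choose (s + 1) : ℝ) * h₀

end MixtureWeight

/-- Gibbs' inequality `log x ≤ x - 1` at `x = p / α` and at `x = (1 - p) / (1 - α)`. -/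
lemma pow_mul_one_sub_pow_le {p α : ℝ} {s m : ℕ} (hp : 0 < p) (hpα : p ≤ α) (hα : α < 1)
    (hsm : (s + m) * α ≤ s) :
    p ^ s * (1 - p) ^ m ≤ α ^ s * (1 - α) ^ m := by
  have hα0 : 0 < α := hp.trans_le hpα
  have hq : 0 < 1 - p := by linarith
  have hβ : 0 < 1 - α := by linarith
  have hlog₁ := Real.log_le_sub_one_of_pos (div_pos hp hα0)
  have hlog₂ := Real.log_le_sub_one_of_pos (div_pos hq hβ)
  rw [Real.log_div hp.ne' hα0.ne'] at hlog₁
  rw [Real.log_div hq.ne' hβ.ne'] at hlog₂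
  have hgibbs : s * (p / α - 1) + m * ((1 - p) / (1 - α) - 1) ≤ 0 := by
    have : s * (p / α - 1) + m * ((1 - p) / (1 - α) - 1) =
        (α - p) * ((s + m) * α - s) / (α * (1 - α)) := by
      field_simp; ring
    rw [this]
    exact div_nonpos_of_nonpos_of_nonneg (mul_nonpos_of_nonneg_of_nonpos (by linarith)
      (by linarith)) (by positivity)
  rw [← Real.log_le_log_iff (by positivity) (by positivity), Real.log_mul (by positivity)
    (by positivity), Real.log_mul (by positivity) (by positivity), Real.log_pow, Real.log_pow,
    Real.log_pow, Real.log_pow]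
  nlinarith [(s.cast_nonneg : (0 : ℝ) ≤ s), (m.cast_nonneg : (0 : ℝ) ≤ m)]

section CSMPaths

variable {p α ε : ℝ}

/-- Above the upper boundary `s > n α`, so `p` is less likely than `α`, and `α` is in turn at
most `ε` times as likely as the uniform mixture (Robbins' likelihood-ratio bound). -/
lemma pow_mul_one_sub_pow_le_mul_mixtureWeight (hp : 0 < p) (hpα : p ≤ α)
    (hα : α ∈ Set.Ioo 0 1) (hε : ε < 1) {n s : ℕ} (hsn : s ≤ n)
    (hu : csmUpper α ε n ≤ s) :
    p ^ s * (1 - p) ^ (n - s) ≤ ε * mixtureWeight n s := by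
  have hns : (n : ℝ) * α < s := (mul_lt_csmUpper hα hε n).trans_le (by exact_mod_cast hu)
  have hc : (0 : ℝ) < n.choose s := by exact_mod_cast Nat.choose_pos hsn
  calc p ^ s * (1 - p) ^ (n - s) ≤ α ^ s * (1 - α) ^ (n - s) :=
        pow_mul_one_sub_pow_le hp hpα hα.2
          (by rw [← Nat.cast_add, Nat.add_sub_cancel' hsn]; linarith)
    _ = mixtureWeight n s * ((n + 1) * binomPMF n α s) := by
        unfold mixtureWeight binomPMF; field_simp
    _ ≤ mixtureWeight n s * ε :=
        mul_le_mul_of_nonneg_left (mul_binomPMF_le_of_csmUpper_le hsn hu)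
          (mixtureWeight_nonneg n s)
    _ = ε * mixtureWeight n s := mul_comm _ _

def csmStopsAt (α ε : ℝ) (n : ℕ) (A : Finset ℕ) : Prop :=
  csmUpper α ε n ≤ #A ∨ (#A : ℤ) ≤ csmLower α ε n

open Classical in
noncomputable def csmUpperStopPaths (α ε : ℝ) (n : ℕ) : Finset (Finset ℕ) :=
  (firstStopPaths (csmStopsAt α ε) n).filter fun A => csmUpper α ε n ≤ #A

lemma mem_csmUpperStopPaths {n : ℕ} {A : Finset ℕ} :
    A ∈ csmUpperStopPaths α ε n ↔
      A ∈ firstStopPaths (csmStopsAt α ε) n ∧ csmUpper α ε n ≤ #A := by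
  simp [csmUpperStopPaths]

lemma subset_range_of_mem_csmUpperStopPaths {n : ℕ} {A : Finset ℕ}
    (hA : A ∈ csmUpperStopPaths α ε n) : A ⊆ range n :=
  (mem_firstStopPaths.1 (mem_csmUpperStopPaths.1 hA).1).1

lemma empty_mem_firstStopPaths_csmStopsAt (hα : α ∈ Set.Ioo 0 1) (hε : ε < 1) {m : ℕ}
    (hm : 0 ≤ csmLower α ε m) (hbefore : ∀ k < m, csmLower α ε k < 0) :
    ∅ ∈ firstStopPaths (csmStopsAt α ε) m := by
  refine mem_firstStopPaths.2 ⟨empty_subset _, fun k hk => ?_, Or.inr (by simpa using hm)⟩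
  rintro (h | h)
  · simp only [empty_inter, card_empty, Nat.cast_zero] at h
    exact (csmUpper_pos hα hε k).not_ge h
  · simp only [empty_inter, card_empty, Nat.cast_zero] at h
    exact (hbefore k hk).not_ge h

lemma empty_notMem_csmUpperStopPaths (hα : α ∈ Set.Ioo 0 1) (hε : ε < 1) (n : ℕ) :
    ∅ ∉ csmUpperStopPaths α ε n := fun h => by
  simpa using (csmUpper_pos hα hε n).trans_le (mem_csmUpperStopPaths.1 h).2

lemma sum_mixtureWeight_csmUpperStopPaths_add_le (hα : α ∈ Set.Ioo 0 1) (hε : ε < 1) {m : ℕ}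
    (hm : ∅ ∈ firstStopPaths (csmStopsAt α ε) m) (n : ℕ) :
    ∑ A ∈ csmUpperStopPaths α ε n, mixtureWeight n #A +
        (if n = m then mixtureWeight m 0 else 0) ≤
      ∑ A ∈ firstStopPaths (csmStopsAt α ε) n, mixtureWeight n #A := by
  have hsub : csmUpperStopPaths α ε n ⊆ firstStopPaths (csmStopsAt α ε) n := filter_subset _ _
  split_ifs with hn
  · subst hn
    calc _ = ∑ A ∈ insert ∅ (csmUpperStopPaths α ε n), mixtureWeight n #A := by
          rw [sum_insert (empty_notMem_csmUpperStopPaths hα hε n), card_empty, add_comm]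
      _ ≤ _ := sum_le_sum_of_subset_of_nonneg (insert_subset hm hsub)
          fun _ _ _ => mixtureWeight_nonneg _ _
  · rw [add_zero]
    exact sum_le_sum_of_subset_of_nonneg hsub fun _ _ _ => mixtureWeight_nonneg _ _

/-- The all-failure path first stops at the lower boundary, at the first `m` with `0 ≤ l_m`, so
its mixture weight `1 / (m + 1)` is missing from the upper-stopped paths. -/
lemma exists_sum_mixtureWeight_csmUpperStopPaths_le (hα : α ∈ Set.Ioo 0 1)
    (hε : ε ∈ Set.Ioo 0 1) :
    ∃ δ > 0, ∀ N,
      ∑ n ∈ range N, ∑ A ∈ csmUpperStopPaths α ε n, mixtureWeight n #A ≤ 1 - δ := by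
  have hstop := exists_csmLower_nonneg hα hε
  set m := Nat.find hstop
  have hfirst : ∅ ∈ firstStopPaths (csmStopsAt α ε) m :=
    empty_mem_firstStopPaths_csmStopsAt hα hε.2 (Nat.find_spec hstop)
      fun k hk => not_le.1 (Nat.find_min hstop hk)
  refine ⟨mixtureWeight m 0, by simp [mixtureWeight]; positivity, fun N => ?_⟩
  calc ∑ n ∈ range N, ∑ A ∈ csmUpperStopPaths α ε n, mixtureWeight n #A
      ≤ ∑ n ∈ range (N + m + 1), ∑ A ∈ csmUpperStopPaths α ε n, mixtureWeight n #A :=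
        sum_le_sum_of_subset_of_nonneg (range_subset_range.2 (by omega))
          fun n _ _ => sum_nonneg fun _ _ => mixtureWeight_nonneg _ _
    _ = ∑ n ∈ range (N + m + 1), (∑ A ∈ csmUpperStopPaths α ε n, mixtureWeight n #A +
          (if n = m then mixtureWeight m 0 else 0)) - mixtureWeight m 0 := by
        rw [sum_add_distrib, sum_ite_eq', if_pos (mem_range.2 (by omega)), add_sub_cancel_right]
    _ ≤ ∑ n ∈ range (N + m + 1),
          ∑ A ∈ firstStopPaths (csmStopsAt α ε) n, mixtureWeight n #A - mixtureWeight m 0 := by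
        gcongr with n
        exact sum_mixtureWeight_csmUpperStopPaths_add_le hα hε.2 hfirst n
    _ ≤ mixtureWeight 0 0 - mixtureWeight m 0 := by
        gcongr
        exact sum_firstStopPaths_le (fun _ _ => mixtureWeight_eq_add) mixtureWeight_nonneg _
    _ = 1 - mixtureWeight m 0 := by simp [mixtureWeight]

end CSMPaths

lemma exists_csmUpper_le_of_lt_csmEstimate {α ε : ℝ} (hα : α ∈ Set.Ioo 0 1) (hε : ε < 1)
    {S : ℕ → ℤ} (h : α < csmEstimate α ε S) :
    ∃ τ, csmUpper α ε τ ≤ S τ ∧ ∀ k < τ, ¬ csmStop α ε S k := by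
  unfold csmEstimate at h
  split_ifs at h with hstop
  · set τ := sInf {n | csmStop α ε S n}
    refine ⟨τ, ?_, fun k hk => Nat.notMem_of_lt_sInf hk⟩
    have hτ : (0 : ℝ) < τ := by
      rcases (Nat.cast_nonneg (α := ℝ) τ).eq_or_lt with h0 | h0
      · rw [← h0, div_zero] at h; linarith [hα.1]
      · exact h0
    have hmean : τ * α < (S τ : ℝ) := by rwa [lt_div_iff₀ hτ, mul_comm] at h
    refine (Nat.sInf_mem hstop).resolve_right fun hlow => ?_
    have : (S τ : ℝ) ≤ csmLower α ε τ := by exact_mod_cast hlow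
    linarith [csmLower_lt_mul hα hε τ]
  · exact absurd h (lt_irrefl α)

section SamplePaths

variable {Ω : Type*} (X : ℕ → Ω → ℕ)

def pathCylinder (n : ℕ) (A : Finset ℕ) : Set Ω :=
  ⋂ i ∈ range n, X i ⁻¹' {if i ∈ A then 1 else 0}

def successes (ω : Ω) (n : ℕ) : Finset ℕ := (range n).filter fun i => X i ω = 1

variable {X} {ω : Ω}

lemma mem_pathCylinder_successes (hω : ∀ i, X i ω ≤ 1) (n : ℕ) :
    ω ∈ pathCylinder X n (successes X ω n) := by
  simp only [pathCylinder, successes, Set.mem_iInter, Set.mem_preimage, Set.mem_singleton_iff,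
    mem_filter]
  intro i hi
  have := hω i
  simp only [hi, true_and]
  split_ifs <;> omega

lemma successes_inter_range {k n : ℕ} (hk : k ≤ n) :
    successes X ω n ∩ range k = successes X ω k := by
  rw [successes, successes, filter_inter, range_inter_range, min_eq_right hk]

lemma card_successes (hω : ∀ i, X i ω ≤ 1) (n : ℕ) :
    #(successes X ω n) = ∑ i ∈ range n, X i ω := by
  rw [successes, card_filter]
  exact sum_congr rfl fun i _ => by have := hω i; split_ifs <;> omega

lemma measure_pathCylinder [MeasureSpace Ω] [IsProbabilityMeasure (ℙ : Measure Ω)] {p : ℝ}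
    (hp0 : 0 ≤ p) (hp1 : p ≤ 1) (hmeas : ∀ i, Measurable (X i)) (hindep : iIndepFun X ℙ)
    (hval : ∀ i ω, X i ω ≤ 1) (hdist : ∀ i, ℙ {ω | X i ω = 1} = ENNReal.ofReal p)
    {n : ℕ} {A : Finset ℕ} (hA : A ⊆ range n) :
    ℙ (pathCylinder X n A) = ENNReal.ofReal (p ^ #A * (1 - p) ^ (n - #A)) := by
  have hzero : ∀ i, ℙ (X i ⁻¹' {0}) = ENNReal.ofReal (1 - p) := fun i => by
    have : X i ⁻¹' {0} = (X i ⁻¹' {1})ᶜ := by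
      ext ω; have := hval i ω; simp only [Set.mem_preimage, Set.mem_singleton_iff,
        Set.mem_compl_iff]; omega
    rw [this, prob_compl_eq_one_sub (hmeas i (measurableSet_singleton 1)),
      show ℙ (X i ⁻¹' {1}) = _ from hdist i, ENNReal.ofReal_sub _ hp0, ENNReal.ofReal_one]
  rw [pathCylinder, hindep.measure_inter_preimage_eq_mul _ fun i _ => measurableSet_singleton _]
  calc ∏ i ∈ range n, ℙ (X i ⁻¹' {if i ∈ A then 1 else 0})
      = ∏ i ∈ range n, ENNReal.ofReal (if i ∈ A then p else 1 - p) :=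
        prod_congr rfl fun i _ => by split_ifs; exacts [hdist i, hzero i]
    _ = ENNReal.ofReal (∏ i ∈ range n, if i ∈ A then p else 1 - p) :=
        (ENNReal.ofReal_prod_of_nonneg fun i _ => by split_ifs <;> linarith).symm
    _ = ENNReal.ofReal (p ^ #A * (1 - p) ^ (n - #A)) := by
        rw [prod_ite, prod_const, prod_const, filter_mem_eq_inter, inter_eq_right.2 hA,
          filter_notMem_eq_sdiff, card_sdiff_of_subset hA, card_range]

lemma setOf_lt_csmEstimate_subset {α ε : ℝ} (hα : α ∈ Set.Ioo 0 1) (hε : ε < 1)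
    (hval : ∀ i ω, X i ω ≤ 1) :
    {ω | α < csmEstimate α ε (fun n => ((∑ i ∈ range n, X i ω : ℕ) : ℤ))} ⊆
      ⋃ n, ⋃ A ∈ csmUpperStopPaths α ε n, pathCylinder X n A := by
  intro ω hω
  obtain ⟨τ, hup, hbefore⟩ := exists_csmUpper_le_of_lt_csmEstimate hα hε hω
  have hsum : ∀ k ≤ τ,
      ((∑ i ∈ range k, X i ω : ℕ) : ℤ) = #(successes X ω τ ∩ range k) :=
    fun k hk => by rw [successes_inter_range hk, card_successes (hval · ω)]
  have hτ : ((∑ i ∈ range τ, X i ω : ℕ) : ℤ) = #(successes X ω τ) := by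
    rw [hsum τ le_rfl, successes_inter_range le_rfl]
  refine Set.mem_iUnion.2 ⟨τ, Set.mem_iUnion₂.2 ⟨successes X ω τ, ?_,
    mem_pathCylinder_successes (hval · ω) τ⟩⟩
  have hupper : csmUpper α ε τ ≤ #(successes X ω τ) := hτ ▸ hup
  refine mem_csmUpperStopPaths.2 ⟨mem_firstStopPaths.2 ⟨filter_subset _ _, fun k hk => ?_,
    Or.inl hupper⟩, hupper⟩
  unfold csmStopsAt
  rw [← hsum k hk.le]
  exact hbefore k hk

end SamplePaths

lemma exists_sum_likelihood_csmUpperStopPaths_le {p α ε : ℝ} (hp : 0 < p) (hpα : p ≤ α)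
    (hα : α ∈ Set.Ioo 0 1) (hε : ε ∈ Set.Ioo 0 1) :
    ∃ δ > 0, ∀ N,
      ∑ n ∈ range N, ∑ A ∈ csmUpperStopPaths α ε n, p ^ #A * (1 - p) ^ (n - #A) ≤
        ε * (1 - δ) := by
  obtain ⟨δ, hδ, hsum⟩ := exists_sum_mixtureWeight_csmUpperStopPaths_le hα hε
  refine ⟨δ, hδ, fun N => ?_⟩
  calc _ ≤ ∑ n ∈ range N, ∑ A ∈ csmUpperStopPaths α ε n, ε * mixtureWeight n #A :=
        sum_le_sum fun n _ => sum_le_sum fun A hA =>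
          pow_mul_one_sub_pow_le_mul_mixtureWeight hp hpα hα hε.2
            ((card_le_card (subset_range_of_mem_csmUpperStopPaths hA)).trans_eq (card_range n))
            (mem_csmUpperStopPaths.1 hA).2
    _ ≤ ε * (1 - δ) := by
        simp_rw [← mul_sum]
        exact mul_le_mul_of_nonneg_left (hsum N) hε.1.le

lemma tsum_likelihood_csmUpperStopPaths_lt {p α ε : ℝ} (hp : p ∈ Set.Ioo 0 1)
    (hpα : p ≤ α) (hα : α ∈ Set.Ioo 0 1) (hε : ε ∈ Set.Ioo 0 1) :
    ∑' n, ∑ A ∈ csmUpperStopPaths α ε n, ENNReal.ofReal (p ^ #A * (1 - p) ^ (n - #A)) <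
      ENNReal.ofReal ε := by
  obtain ⟨δ, hδ, hsum⟩ := exists_sum_likelihood_csmUpperStopPaths_le hp.1 hpα hα hε
  have hL : ∀ n, ∀ A ∈ csmUpperStopPaths α ε n, 0 ≤ p ^ #A * (1 - p) ^ (n - #A) :=
    fun n A _ => mul_nonneg (pow_nonneg hp.1.le _) (pow_nonneg (by linarith [hp.2]) _)
  calc _ ≤ ENNReal.ofReal (ε * (1 - δ)) := ENNReal.tsum_le_of_sum_range_le fun N => by
        simp_rw [← ENNReal.ofReal_sum_of_nonneg (hL _)]
        rw [← ENNReal.ofReal_sum_of_nonneg fun n _ => sum_nonneg (hL n)]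
        exact ENNReal.ofReal_le_ofReal (hsum N)
    _ < ENNReal.ofReal ε := by
        rw [ENNReal.ofReal_lt_ofReal_iff hε.1]
        nlinarith [hε.1]

/-- If `p ≤ α`, the CSM estimator satisfies `ℙ_p(p̂ > α) < ε`: the resampling risk of the
confidence sequence method is uniformly bounded by `ε`. -/
theorem stmt10
    (Ω : Type*) [MeasureSpace Ω] [IsProbabilityMeasure (ℙ : Measure Ω)]
    (p α ε : ℝ) (hp : p ∈ Set.Ioo (0:ℝ) 1) (hα : α ∈ Set.Ioo (0:ℝ) 1)
    (hpα : p ≤ α) (hε : ε ∈ Set.Ioo (0:ℝ) 1)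
    (X : ℕ → Ω → ℕ)
    (hmeas : ∀ i, Measurable (X i))
    (hindep : iIndepFun X ℙ)
    (hval : ∀ i ω, X i ω ≤ 1)
    (hdist : ∀ i, ℙ {ω | X i ω = 1} = ENNReal.ofReal p) :
    ℙ {ω | α < csmEstimate α ε (fun n => ((∑ i ∈ Finset.range n, X i ω : ℕ) : ℤ))}
      < ENNReal.ofReal ε := by
  calc ℙ {ω | α < csmEstimate α ε (fun n => ((∑ i ∈ range n, X i ω : ℕ) : ℤ))}
      ≤ ℙ (⋃ n, ⋃ A ∈ csmUpperStopPaths α ε n, pathCylinder X n A) :=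
        measure_mono (setOf_lt_csmEstimate_subset hα hε.2 hval)
    _ ≤ ∑' n, ∑ A ∈ csmUpperStopPaths α ε n, ℙ (pathCylinder X n A) :=
        (measure_iUnion_le _).trans (ENNReal.tsum_le_tsum fun n => measure_biUnion_finset_le _ _)
    _ = ∑' n, ∑ A ∈ csmUpperStopPaths α ε n, ENNReal.ofReal (p ^ #A * (1 - p) ^ (n - #A)) :=
        tsum_congr fun n => sum_congr rfl fun A hA => measure_pathCylinder hp.1.le hp.2.le hmeas
          hindep hval hdist (subset_range_of_mem_csmUpperStopPaths hA)
    _ < ENNReal.ofReal ε := tsum_likelihood_csmUpperStopPaths_lt hp hpα hα hε
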